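/- The coboundary operator is a right derivation of the commutator algebra: for every bilinear map μ ∈ C² and all multilinear maps f ∈ C^m, g ∈ C^n, δ_μ [f,g] = (−1)^{|g|} [δ_μ f, g] + [f, δ_μ g], where |g| = n − 1. -/

import Mathlib

open Finset

section OperadPrelude

variable {K : Type*} [CommRing K] {L : Type*} [AddCommGroup L] [Module K L]

/-- `C K L n`: the `K`-module of `n`-multilinear maps `L^n → L`
(the degree-`n` component of the endomorphism operad of `L`). -/
abbrev C (K L : Type*) [CommRing K] [AddCommGroup L] [Module K L] (n : ℕ) :=
  MultilinearMap K (fun _ : Fin n => L) L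

/-- The extension of an `n`-ary multilinear operation to sequences `ℕ → L`:
it evaluates `f` on the first `n` entries of the sequence.  Two `n`-ary
multilinear operations are equal iff their extensions are equal, so operadic
identities are stated as identities between extensions. -/
def ex {n : ℕ} (f : C K L n) : (ℕ → L) → L := fun x => f fun j => x j.1

/-- The sign `(-1)^e` for an integer exponent `e`. -/
def sgn (e : ℤ) : ℤ := (((-1 : ℤˣ) ^ e : ℤˣ) : ℤ)

/-- Partial composition `f ∘ᵢ g`, where `n = deg g`:
`(f ∘ᵢ g)(x₀, x₁, …) = (-1)^{i(n-1)} f(x₀,…,x_{i-1}, g(x_i,…,x_{i+n-1}), x_{i+n},…)`. -/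
def pc (n i : ℕ) (f g : (ℕ → L) → L) : (ℕ → L) → L :=
  fun x => sgn ((i : ℤ) * ((n : ℤ) - 1)) •
    f fun j => if j < i then x j else if j = i then g (fun k => x (i + k)) else x (j + n - 1)

/-- Total composition `f ∘ g := Σ_{i=0}^{m-1} f ∘ᵢ g`, where `m = deg f`, `n = deg g`. -/
def tc (m n : ℕ) (f g : (ℕ → L) → L) : (ℕ → L) → L :=
  fun x => ∑ i ∈ Finset.range m, pc n i f g x

/-- The associator `(h, f, g) := (h ∘ f) ∘ g − h ∘ (f ∘ g)` of the total composition,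
where `m = deg h`, `n = deg f`, `p = deg g`. -/
def assoc (m n p : ℕ) (h f g : (ℕ → L) → L) : (ℕ → L) → L :=
  fun x => tc (m + n - 1) p (tc m n h f) g x - tc m (n + p - 1) h (tc n p f g) x

/-- The brace `⟨h|fg⟩ := Σ (h ∘ᵢ f) ∘ⱼ g`, summed over `0 ≤ i ≤ m-2`,
`i + n ≤ j ≤ m + n - 2`, where `m = deg h`, `n = deg f`, `p = deg g`. -/
def br2 (m n p : ℕ) (h f g : (ℕ → L) → L) : (ℕ → L) → L :=
  fun x => ∑ i ∈ Finset.range (m - 1), ∑ j ∈ Finset.Icc (i + n) (m + n - 2),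
    pc p j (pc n i h f) g x

/-- The triple brace `⟨h|fgb⟩ := Σ ((h ∘ᵢ f) ∘ⱼ g) ∘ₖ b`, summed over `0 ≤ i ≤ m-3`,
`i + n ≤ j ≤ m + n - 3`, `j + p ≤ k ≤ m + n + p - 3`, where
`m = deg h`, `n = deg f`, `p = deg g`, `q = deg b`. -/
def br3 (m n p q : ℕ) (h f g b : (ℕ → L) → L) : (ℕ → L) → L :=
  fun x => ∑ i ∈ Finset.range (m - 2), ∑ j ∈ Finset.Icc (i + n) (m + n - 3),
    ∑ k ∈ Finset.Icc (j + p) (m + n + p - 3),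
      pc q k (pc p j (pc n i h f) g) b x

/-- The Gerstenhaber bracket `[f,g] := f ∘ g − (-1)^{|f||g|} g ∘ f`,
where `m = deg f`, `n = deg g`, `|f| = m - 1`, `|g| = n - 1`. -/
def gb (m n : ℕ) (f g : (ℕ → L) → L) : (ℕ → L) → L :=
  fun x => tc m n f g x - sgn (((m : ℤ) - 1) * ((n : ℤ) - 1)) • tc n m g f x

/-- The cup product `f ⌣ g := (-1)^{deg f} (μ ∘₀ f) ∘_{deg f} g`,
where `m = deg f`, `n = deg g`. -/
def cup (μ : C K L 2) (m n : ℕ) (f g : (ℕ → L) → L) : (ℕ → L) → L :=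
  fun x => sgn (m : ℤ) • pc n m (pc m 0 (ex μ) f) g x

/-- The coboundary operator `δ_μ f := −[f, μ]`, where `m = deg f`. -/
def delta (μ : C K L 2) (m : ℕ) (f : (ℕ → L) → L) : (ℕ → L) → L :=
  fun x => - gb m 2 f (ex μ) x

/-!
Since `δ_μ = -[·, μ]` and `|μ| = 1`, the claim is the graded Jacobi identity
`[[f, g], h] = [f, [g, h]] + (-1)^{|g||h|} [[f, h], g]` at `h = μ`. Jacobi follows from the
pre-Lie identity: in the associator `(f ∘ g) ∘ h - f ∘ (g ∘ h)` only the terms survive in which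
`g` and `h` are inserted into two different slots of `f`, and exchanging two such parallel
insertions costs the sign `(-1)^{|g||h|}`, so the associator is graded symmetric in `g` and `h`.
-/

theorem sgn_add (a b : ℤ) : sgn (a + b) = sgn a * sgn b := by
  simp only [sgn, zpow_add, Units.val_mul]

theorem sgn_eq_of_even_sub {a b : ℤ} (h : Even (a - b)) : sgn a = sgn b :=
  congrArg Units.val ((Int.negOnePow_eq_iff a b).mpr h)

theorem sgn_mul_self (e : ℤ) : sgn e * sgn e = 1 := by
  rw [← sgn_add, ← two_mul]
  exact congrArg Units.val (Int.negOnePow_two_mul e)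

theorem sgn_pred_add_mul {a b : ℕ} (hab : 1 ≤ a + b) (e : ℤ) :
    sgn ((((a + b - 1 : ℕ) : ℤ) - 1) * e) = sgn (((a : ℤ) - 1) * e) * sgn (((b : ℤ) - 1) * e) := by
  rw [← sgn_add, ← add_mul]
  congr 2
  omega

def insertAt (x : ℕ → L) (i n : ℕ) (v : L) : ℕ → L :=
  fun j => if j < i then x j else if j = i then v else x (j + n - 1)

theorem pc_apply (n i : ℕ) (f g : (ℕ → L) → L) (x : ℕ → L) :
    pc n i f g x = sgn ((i : ℤ) * ((n : ℤ) - 1)) • f (insertAt x i n (g fun k => x (i + k))) :=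
  rfl

theorem ex_congr {c : ℕ} (H : C K L c) {x y : ℕ → L} (hxy : ∀ k < c, x k = y k) :
    ex H x = ex H y :=
  congrArg H (funext fun k => hxy k k.2)

theorem ex_insertAt {a i : ℕ} (F : C K L a) (hi : i < a) (x : ℕ → L) (n : ℕ) (v : L) :
    ex F (insertAt x i n v) = F.toLinearMap (fun j => insertAt x i n 0 j) ⟨i, hi⟩ v := by
  rw [MultilinearMap.toLinearMap_apply, ex]
  congr 1
  funext j
  by_cases hj : (j : ℕ) = i
  · obtain rfl : j = ⟨i, hi⟩ := Fin.ext hj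
    simp [insertAt]
  · rw [Function.update_of_ne (fun h => hj (by rw [h]))]
    simp [insertAt, hj]

theorem pc_ex_finset_sum {a i : ℕ} (F : C K L a) (hi : i < a) (n : ℕ) {ι : Type*} (s : Finset ι)
    (G : ι → (ℕ → L) → L) (x : ℕ → L) :
    pc n i (ex F) (fun y => ∑ t ∈ s, G t y) x = ∑ t ∈ s, pc n i (ex F) (G t) x := by
  simp only [pc_apply, ex_insertAt F hi, map_sum, Finset.smul_sum]

theorem tc_zero (n : ℕ) (f g : (ℕ → L) → L) : tc 0 n f g = 0 := by
  funext x
  simp [tc]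

theorem tc_add_left (m n : ℕ) (g X Y : (ℕ → L) → L) :
    tc m n (X + Y) g = tc m n X g + tc m n Y g := by
  funext x
  simp only [tc, pc_apply, Pi.add_apply, smul_add, Finset.sum_add_distrib]

theorem tc_add_right {m : ℕ} (F : C K L m) (n : ℕ) (X Y : (ℕ → L) → L) :
    tc m n (ex F) (X + Y) = tc m n (ex F) X + tc m n (ex F) Y := by
  funext x
  simp only [tc, Pi.add_apply, ← Finset.sum_add_distrib]
  refine Finset.sum_congr rfl fun i hi => ?_
  simp only [pc_apply, ex_insertAt F (Finset.mem_range.mp hi), Pi.add_apply, map_add, smul_add]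

theorem tc_zero_left (m n : ℕ) (g : (ℕ → L) → L) : tc m n 0 g = 0 :=
  map_zero (AddMonoidHom.mk' (fun X => tc m n X g) (tc_add_left m n g))

theorem tc_neg_left (m n : ℕ) (g X : (ℕ → L) → L) : tc m n (-X) g = -tc m n X g :=
  map_neg (AddMonoidHom.mk' (fun X => tc m n X g) (tc_add_left m n g)) X

theorem tc_sub_left (m n : ℕ) (g X Y : (ℕ → L) → L) :
    tc m n (X - Y) g = tc m n X g - tc m n Y g :=
  map_sub (AddMonoidHom.mk' (fun X => tc m n X g) (tc_add_left m n g)) X Y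

theorem tc_zsmul_left (m n : ℕ) (g X : (ℕ → L) → L) (c : ℤ) :
    tc m n (c • X) g = c • tc m n X g :=
  map_zsmul (AddMonoidHom.mk' (fun X => tc m n X g) (tc_add_left m n g)) c X

theorem tc_zero_right {m : ℕ} (F : C K L m) (n : ℕ) : tc m n (ex F) 0 = 0 :=
  map_zero (AddMonoidHom.mk' (tc m n (ex F)) (tc_add_right F n))

theorem tc_neg_right {m : ℕ} (F : C K L m) (n : ℕ) (X : (ℕ → L) → L) :
    tc m n (ex F) (-X) = -tc m n (ex F) X :=
  map_neg (AddMonoidHom.mk' (tc m n (ex F)) (tc_add_right F n)) X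

theorem tc_sub_right {m : ℕ} (F : C K L m) (n : ℕ) (X Y : (ℕ → L) → L) :
    tc m n (ex F) (X - Y) = tc m n (ex F) X - tc m n (ex F) Y :=
  map_sub (AddMonoidHom.mk' (tc m n (ex F)) (tc_add_right F n)) X Y

theorem tc_zsmul_right {m : ℕ} (F : C K L m) (n : ℕ) (X : (ℕ → L) → L) (c : ℤ) :
    tc m n (ex F) (c • X) = c • tc m n (ex F) X :=
  map_zsmul (AddMonoidHom.mk' (tc m n (ex F)) (tc_add_right F n)) c X

theorem pc_comm_of_lt {b c i j : ℕ} (f g : (ℕ → L) → L) (H : C K L c) (hji : j < i) :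
    pc c j (pc b i f g) (ex H)
      = sgn (((b : ℤ) - 1) * ((c : ℤ) - 1)) • pc b (i + c - 1) (pc c j f (ex H)) g := by
  funext x
  simp only [Pi.smul_apply, pc_apply, smul_smul, ← sgn_add]
  have hg : (fun k => insertAt x j c (ex H fun k => x (j + k)) (i + k))
      = fun k => x (i + c - 1 + k) := by
    funext k
    simp only [insertAt, if_neg (by omega : ¬ i + k < j), if_neg (by omega : ¬ i + k = j)]
    congr 1
    omega
  have hh : ex H (fun k => insertAt x (i + c - 1) b (g fun k => x (i + c - 1 + k)) (j + k))
      = ex H (fun k => x (j + k)) :=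
    ex_congr H fun k hk => by simp only [insertAt, if_pos (by omega : j + k < i + c - 1)]
  rw [hg, hh]
  have hic : ((i + c - 1 : ℕ) : ℤ) = i + c - 1 := by omega
  congr 1
  · rw [hic]
    exact sgn_eq_of_even_sub ⟨-(((b : ℤ) - 1) * ((c : ℤ) - 1)), by ring⟩
  · congr 1
    funext t
    simp only [insertAt]
    split_ifs <;> first | rfl | (exact congrArg x (by omega)) | (exfalso; omega)

theorem pc_assoc {a b c i j : ℕ} (F : C K L a) (g h : (ℕ → L) → L)
    (hia : i < a) (hij : i ≤ j) (hjb : j < i + b) :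
    pc c j (pc b i (ex F) g) h = pc (b + c - 1) i (ex F) (pc c (j - i) g h) := by
  funext x
  simp only [pc_apply]
  rw [ex_insertAt F hia x (b + c - 1), map_zsmul, ← ex_insertAt F hia x (b + c - 1),
    smul_smul, smul_smul]
  have hg : (fun k => insertAt x j c (h fun k => x (j + k)) (i + k))
      = insertAt (fun k => x (i + k)) (j - i) c (h fun k => x (i + (j - i + k))) := by
    funext k
    simp only [insertAt]
    split_ifs <;> first | rfl | (exact congrArg x (by omega)) | (exfalso; omega) |
      exact congrArg h (funext fun k => congrArg x (by omega))
  rw [hg]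
  have hbc : ((b + c - 1 : ℕ) : ℤ) = b + c - 1 := by omega
  have hji : ((j - i : ℕ) : ℤ) = j - i := by omega
  congr 1
  · rw [hbc, hji, ← sgn_add, ← sgn_add]
    congr 1
    ring
  · congr 1
    funext t
    simp only [insertAt]
    split_ifs <;> first | rfl | (exact congrArg x (by omega)) | (exfalso; omega)

theorem sum_range_sum_range_eq_sum_range_sum_Ico {M : Type*} [AddCommMonoid M] (a c : ℕ)
    (φ : ℕ → ℕ → M) :
    ∑ i ∈ range a, ∑ j ∈ range i, φ j (i + c - 1)
      = ∑ j ∈ range a, ∑ k ∈ Ico (j + c) (a + c - 1), φ j k := by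
  rw [Finset.sum_comm' (t' := range a) (s' := fun j => Ioo j a)
    (fun i j => by simp only [mem_range, mem_Ioo]; omega)]
  refine Finset.sum_congr rfl fun j _ => ?_
  exact Finset.sum_nbij' (fun i => i + c - 1) (fun k => k + 1 - c)
    (fun i hi => by simp only [mem_Ioo, mem_Ico] at hi ⊢; omega)
    (fun k hk => by simp only [mem_Ioo, mem_Ico] at hk ⊢; omega)
    (fun i hi => by simp only [mem_Ioo] at hi; omega)
    (fun k hk => by simp only [mem_Ico] at hk; omega)
    (fun _ _ => rfl)

theorem br2_apply (a b c : ℕ) (f g h : (ℕ → L) → L) (x : ℕ → L) :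
    br2 a b c f g h x
      = ∑ i ∈ range a, ∑ j ∈ Ico (i + b) (a + b - 1), pc c j (pc b i f g) h x := by
  rcases a with _ | a
  · simp [br2]
  rw [Finset.sum_range_succ, Nat.add_right_comm, Nat.add_sub_cancel, Ico_self, sum_empty, add_zero]
  refine Finset.sum_congr rfl fun i hi => Finset.sum_congr ?_ fun _ _ => rfl
  ext j
  simp only [mem_Icc, mem_Ico, mem_range] at hi ⊢
  omega

theorem tc_tc_apply (a b c : ℕ) (f g h : (ℕ → L) → L) (x : ℕ → L) :
    tc (a + b - 1) c (tc a b f g) h x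
      = ∑ i ∈ range a, ∑ j ∈ range (a + b - 1), pc c j (pc b i f g) h x := by
  rw [Finset.sum_comm]
  simp only [tc, pc_apply, Finset.smul_sum]

theorem pc_ex_tc {a b c i : ℕ} (F : C K L a) (g h : (ℕ → L) → L) (hia : i < a) (x : ℕ → L) :
    pc (b + c - 1) i (ex F) (tc b c g h) x
      = ∑ j ∈ Ico i (i + b), pc c j (pc b i (ex F) g) h x := by
  unfold tc
  rw [Finset.sum_Ico_eq_sum_range, Nat.add_sub_cancel_left, pc_ex_finset_sum F hia]
  refine Finset.sum_congr rfl fun k hk => ?_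
  rw [pc_assoc F g h hia (by omega) (by simpa using hk), Nat.add_sub_cancel_left]

theorem assoc_eq (m n p : ℕ) (h f g : (ℕ → L) → L) :
    assoc m n p h f g = tc (m + n - 1) p (tc m n h f) g - tc m (n + p - 1) h (tc n p f g) :=
  rfl

theorem assoc_eq_br2_add {a b c : ℕ} (F : C K L a) (g : (ℕ → L) → L) (H : C K L c) :
    assoc a b c (ex F) g (ex H)
      = br2 a b c (ex F) g (ex H)
        + sgn (((b : ℤ) - 1) * ((c : ℤ) - 1)) • br2 a c b (ex F) (ex H) g := by
  funext x
  set T := fun i j => pc c j (pc b i (ex F) g) (ex H) x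
  -- `h` goes into a slot of `f` left of `g`, into `g`, or right of `g`
  have hsplit : ∀ i ∈ range a, ∑ j ∈ range (a + b - 1), T i j
      = ∑ j ∈ range i, T i j + pc (b + c - 1) i (ex F) (tc b c g (ex H)) x
        + ∑ j ∈ Ico (i + b) (a + b - 1), T i j := by
    intro i hi
    rw [mem_range] at hi
    rw [pc_ex_tc F g (ex H) hi, range_eq_Ico, range_eq_Ico,
      sum_Ico_consecutive _ (Nat.zero_le i) (Nat.le_add_right i b),
      sum_Ico_consecutive _ (Nat.zero_le _) (by omega)]
  have hleft : ∑ i ∈ range a, ∑ j ∈ range i, T i j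
      = sgn (((b : ℤ) - 1) * ((c : ℤ) - 1)) • br2 a c b (ex F) (ex H) g x := by
    rw [br2_apply, ← sum_range_sum_range_eq_sum_range_sum_Ico, Finset.smul_sum]
    refine Finset.sum_congr rfl fun i _ => ?_
    rw [Finset.smul_sum]
    exact Finset.sum_congr rfl fun j hj => congrFun (pc_comm_of_lt _ g H (mem_range.1 hj)) x
  have hmid : ∑ i ∈ range a, pc (b + c - 1) i (ex F) (tc b c g (ex H)) x
      = tc a (b + c - 1) (ex F) (tc b c g (ex H)) x := rfl
  rw [assoc, tc_tc_apply, Finset.sum_congr rfl hsplit, sum_add_distrib, sum_add_distrib, hleft,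
    hmid, Pi.add_apply, Pi.smul_apply, br2_apply a b c]
  abel

theorem assoc_comm {a b c : ℕ} (F : C K L a) (G : C K L b) (H : C K L c) :
    assoc a b c (ex F) (ex G) (ex H)
      = sgn (((b : ℤ) - 1) * ((c : ℤ) - 1)) • assoc a c b (ex F) (ex H) (ex G) := by
  rw [assoc_eq_br2_add, assoc_eq_br2_add, smul_add, smul_smul, mul_comm ((c : ℤ) - 1),
    sgn_mul_self, one_smul, add_comm]

theorem gb_eq (m n : ℕ) (f g : (ℕ → L) → L) :
    gb m n f g = tc m n f g - sgn (((m : ℤ) - 1) * ((n : ℤ) - 1)) • tc n m g f :=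
  rfl

theorem gb_gb_left {a b c : ℕ} (A B : (ℕ → L) → L) (H : C K L c) :
    gb (a + b - 1) c (gb a b A B) (ex H)
      = tc (a + b - 1) c (tc a b A B) (ex H)
        - sgn (((a : ℤ) - 1) * ((b : ℤ) - 1)) • tc (a + b - 1) c (tc b a B A) (ex H)
        - (sgn (((a : ℤ) - 1) * ((c : ℤ) - 1)) * sgn (((b : ℤ) - 1) * ((c : ℤ) - 1))) •
          (tc c (a + b - 1) (ex H) (tc a b A B)
            - sgn (((a : ℤ) - 1) * ((b : ℤ) - 1)) • tc c (a + b - 1) (ex H) (tc b a B A)) := by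
  rw [gb_eq, gb_eq a b, tc_sub_left, tc_zsmul_left, tc_sub_right, tc_zsmul_right]
  rcases Nat.eq_zero_or_pos (a + b) with hab | hab
  -- `a + b - 1` truncates to `0` here, but then both compositions of `A` and `B` vanish
  · obtain ⟨rfl, rfl⟩ : a = 0 ∧ b = 0 := by omega
    simp [tc_zero, tc_zero_left, tc_zero_right]
  · rw [sgn_pred_add_mul hab]

theorem gb_gb_right {a b c : ℕ} (F : C K L a) (B H : (ℕ → L) → L) :
    gb a (b + c - 1) (ex F) (gb b c B H)
      = tc a (b + c - 1) (ex F) (tc b c B H)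
        - sgn (((b : ℤ) - 1) * ((c : ℤ) - 1)) • tc a (b + c - 1) (ex F) (tc c b H B)
        - (sgn (((a : ℤ) - 1) * ((b : ℤ) - 1)) * sgn (((a : ℤ) - 1) * ((c : ℤ) - 1))) •
          (tc (b + c - 1) a (tc b c B H) (ex F)
            - sgn (((b : ℤ) - 1) * ((c : ℤ) - 1)) • tc (b + c - 1) a (tc c b H B) (ex F)) := by
  rw [gb_eq, gb_eq b c, tc_sub_left, tc_zsmul_left, tc_sub_right, tc_zsmul_right]
  rcases Nat.eq_zero_or_pos (b + c) with hbc | hbc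
  · obtain ⟨rfl, rfl⟩ : b = 0 ∧ c = 0 := by omega
    simp [tc_zero, tc_zero_left, tc_zero_right]
  · rw [mul_comm ((a : ℤ) - 1), sgn_pred_add_mul hbc, mul_comm ((b : ℤ) - 1) ((a : ℤ) - 1),
      mul_comm ((c : ℤ) - 1) ((a : ℤ) - 1)]

theorem gb_neg_left {m n : ℕ} (X : (ℕ → L) → L) (G : C K L n) :
    gb m n (-X) (ex G) = -gb m n X (ex G) := by
  simp only [gb_eq, tc_neg_left, tc_neg_right, smul_neg]
  abel

theorem gb_neg_right {m n : ℕ} (F : C K L m) (X : (ℕ → L) → L) :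
    gb m n (ex F) (-X) = -gb m n (ex F) X := by
  simp only [gb_eq, tc_neg_left, tc_neg_right, smul_neg]
  abel

theorem gb_jacobi {a b c : ℕ} (f : C K L a) (g : C K L b) (h : C K L c) :
    gb (a + b - 1) c (gb a b (ex f) (ex g)) (ex h)
      = gb a (b + c - 1) (ex f) (gb b c (ex g) (ex h))
        + sgn (((b : ℤ) - 1) * ((c : ℤ) - 1)) • gb (a + c - 1) b (gb a c (ex f) (ex h)) (ex g) := by
  have P1 := assoc_comm f g h
  have P2 := assoc_comm g f h
  have P3 := assoc_comm h f g
  simp only [assoc_eq, Nat.add_comm b a, Nat.add_comm c a, Nat.add_comm c b] at P1 P2 P3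
  rw [gb_gb_left, gb_gb_right, gb_gb_left, mul_comm ((c : ℤ) - 1) ((b : ℤ) - 1)]
  linear_combination (norm := module) P1 - sgn (((a : ℤ) - 1) * ((b : ℤ) - 1)) • P2
    + (sgn (((a : ℤ) - 1) * ((c : ℤ) - 1)) * sgn (((b : ℤ) - 1) * ((c : ℤ) - 1))) • P3
    + sgn_mul_self (((b : ℤ) - 1) * ((c : ℤ) - 1)) • (sgn (((a : ℤ) - 1) * ((b : ℤ) - 1)) •
      (tc b (a + c - 1) (ex g) (tc a c (ex f) (ex h))
        - sgn (((a : ℤ) - 1) * ((c : ℤ) - 1)) • tc b (a + c - 1) (ex g) (tc c a (ex h) (ex f))))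

/-- the coboundary operator is a right derivation of the
commutator algebra: `δ_μ [f,g] = (-1)^{|g|} [δ_μ f, g] + [f, δ_μ g]`. -/
theorem coboundary_right_derivation_of_bracket
    (μ : C K L 2) {m n : ℕ} (f : C K L m) (g : C K L n) :
    delta μ (m + n - 1) (gb m n (ex f) (ex g))
      = sgn ((n : ℤ) - 1) • gb (m + 1) n (delta μ m (ex f)) (ex g)
          + gb m (n + 1) (ex f) (delta μ n (ex g)) := by
  have hδ : ∀ k X, delta μ k X = -gb k 2 X (ex μ) := fun _ _ => rfl
  have hJ := gb_jacobi f g μ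
  norm_num at hJ
  rw [hδ, hδ, hδ, gb_neg_left, gb_neg_right, hJ]
  module

end OperadPrelude
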